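/- arXiv:1605.07983 — 3 statements merged into one kernel-verified Lean document; each statement's English description precedes it below -/
import Mathlib

section
/- Let I be a small category and O : I → Set a functor whose colimit is a one-point set. Let D : I → Cat be a functor and K a poset. Then the natural map Hom_{Cat^I}(O, D) × K → Hom_{Cat^I}(O, D × K) sending (f₀, k) to the natural transformation x ↦ (f₀(x), k) is an isomorphism of categories, where Hom denotes the internal hom of the functor category Cat^I (with O regarded as a diagram of discrete categories) and D × K is the objectwise product with K. -/
/-!
The `K`-component of an object of `Hom(O, D × K)`, and likewise of a morphism between two
objects of the form `x ↦ (η x, k)`, is a family indexed by the elements of the sets `O(i)` that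
is compatible with the maps `O(g)`, i.e. a cocone on `O`; since `colim O` is a point, this family
is constant. An element of `colim O` supplies a base point at which the constant can be read off.
-/

open CategoryTheory

universe w

variable {I : Type} [SmallCategory I]

/-- An object of the internal-hom category `Hom_{Cat^I}(O, D)` of the cartesian closed
category `Cat^I`, where `O : I ⥤ Set` is regarded as a diagram of discrete categories:
a natural transformation `O ⟶ D`, i.e. a family of maps `O(i) → ob D(i)` strictly
compatible with the structure maps. -/
@[ext]
structure HomObj (O : I ⥤ Type) (D : I ⥤ Cat.{0, 0}) : Type where
  app : ∀ i : I, O.obj i → D.obj i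
  naturality : ∀ {i j : I} (g : i ⟶ j) (x : O.obj i),
    (D.map g).toFunctor.obj (app i x) = app j (O.map g x)

/-- A morphism of the internal-hom category `Hom_{Cat^I}(O, D)` (a "modification"). -/
@[ext]
structure HomHom {O : I ⥤ Type} {D : I ⥤ Cat.{0, 0}} (η θ : HomObj O D) : Type where
  app : ∀ (i : I) (x : O.obj i), η.app i x ⟶ θ.app i x
  naturality : ∀ {i j : I} (g : i ⟶ j) (x : O.obj i),
    (D.map g).toFunctor.map (app i x) =
      eqToHom (η.naturality g x) ≫ app j (O.map g x) ≫ eqToHom (θ.naturality g x).symm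

instance {O : I ⥤ Type} {D : I ⥤ Cat.{0, 0}} : Category (HomObj O D) where
  Hom := HomHom
  id η :=
    { app := fun i x => 𝟙 (η.app i x)
      naturality := fun g x => by simp }
  comp {η θ ρ} u v :=
    { app := fun i x => u.app i x ≫ v.app i x
      naturality := fun g x => by
        rw [Functor.map_comp, u.naturality g x, v.naturality g x]
        simp }
  id_comp u := HomHom.ext (by funext i x; exact Category.id_comp (u.app i x))
  comp_id u := HomHom.ext (by funext i x; exact Category.comp_id (u.app i x))
  assoc u v w := HomHom.ext (by funext i x; exact Category.assoc _ _ _)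

/-- The objectwise product of a diagram `D : I ⥤ Cat` with a fixed small category `K`. -/
def prodK (D : I ⥤ Cat.{0, 0}) (K : Type) [SmallCategory K] : I ⥤ Cat.{0, 0} where
  obj i := Cat.of (D.obj i × K)
  map g := ((D.map g).toFunctor.prod (𝟭 K)).toCatHom
  map_id i := by
    show ((D.map (𝟙 i)).toFunctor.prod (𝟭 K)).toCatHom = _
    rw [D.map_id]; rfl
  map_comp f g := by
    show ((D.map (f ≫ g)).toFunctor.prod (𝟭 K)).toCatHom = _
    rw [D.map_comp]; rfl

/-- The natural transformation `D × K ⟶ D × L` induced by a functor `F : K ⥤ L`,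
acting as the identity on the `D`-component. -/
def prodMapNat (D : I ⥤ Cat.{0, 0}) {K L : Type} [SmallCategory K] [SmallCategory L]
    (F : K ⥤ L) : prodK D K ⟶ prodK D L where
  app i := ((𝟭 (D.obj i)).prod F).toCatHom
  naturality i j g := rfl

private lemma eq_conj {C : Type w} [Category C] {a a' b b' : C} (p : a = a') (q : b' = b)
    {f : a ⟶ b} {g : a' ⟶ b'} (h : f = eqToHom p ≫ g ≫ eqToHom q) :
    g = eqToHom p.symm ≫ f ≫ eqToHom q.symm := by
  subst p; subst q; simpa using h.symm

/-- Functoriality of the internal hom `Hom_{Cat^I}(O, −)` in the second variable. -/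
def homMap (O : I ⥤ Type) {Y Y' : I ⥤ Cat.{0, 0}} (t : Y ⟶ Y') :
    HomObj O Y ⥤ HomObj O Y' where
  obj η :=
    { app := fun i x => (t.app i).toFunctor.obj (η.app i x)
      naturality := fun {i j} g x => by
        have h := Functor.congr_obj (congrArg Cat.Hom.toFunctor (t.naturality g)) (η.app i x)
        dsimp at h ⊢
        rw [← h, η.naturality g x] }
  map {η θ} u :=
    { app := fun i x => (t.app i).toFunctor.map (u.app i x)
      naturality := fun {i j} g x => by
        have h := Functor.congr_hom (congrArg Cat.Hom.toFunctor (t.naturality g)) (u.app i x)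
        dsimp at h ⊢
        rw [eq_conj _ _ h, u.naturality g x]
        simp [eqToHom_map] }
  map_id η := HomHom.ext (by funext i x; exact (t.app i).toFunctor.map_id _)
  map_comp u v := HomHom.ext (by funext i x; exact (t.app i).toFunctor.map_comp _ _)

/-- The internal hom `Hom_{Cat^I}(O, −)` as a functor `Cat^I ⥤ Cat`. -/
def homFunctor (O : I ⥤ Type) : (I ⥤ Cat.{0, 0}) ⥤ Cat.{0, 0} where
  obj Y := Cat.of (HomObj O Y)
  map t := (homMap O t).toCatHom
  map_id Y := rfl
  map_comp t s := rfl

/-- `O : I ⥤ Type` has colimit a one-element set. -/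
def ColimitIsPoint {I : Type} [SmallCategory I] (O : I ⥤ Type) : Prop :=
  Nonempty (Limits.colimit O) ∧ Subsingleton (Limits.colimit O)

universe u

open Limits

lemma CategoryTheory.Limits.Types.eq_of_subsingleton_colimit {J : Type u} [SmallCategory J]
    {F : J ⥤ Type u} [Subsingleton (colimit F)] {X : Type u} (f : ∀ j, F.obj j → X)
    (hf : ∀ {i j : J} (g : i ⟶ j) (x : F.obj i), f j (F.map g x) = f i x)
    {i j : J} (x : F.obj i) (y : F.obj j) : f i x = f j y := by
  let c : Cocone F :=
    { pt := X
      ι :=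
        { app := fun j => TypeCat.ofHom (f j)
          naturality := fun _ _ g => by ext x; exact hf g x } }
  simpa [c] using
    congrArg (colimit.desc F c) (Subsingleton.elim (colimit.ι F i x) (colimit.ι F j y))

def prodKFst (D : I ⥤ Cat.{0, 0}) (K : Type) [SmallCategory K] : prodK D K ⟶ D where
  app i := (CategoryTheory.Prod.fst (D.obj i) K).toCatHom
  naturality _ _ _ := rfl

namespace HomObj

variable {O : I ⥤ Type} {D : I ⥤ Cat.{0, 0}} {K : Type} [SmallCategory K]

variable (O D K) in
def prodConst : HomObj O D × K ⥤ HomObj O (prodK D K) where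
  obj p :=
    { app := fun i x => (p.1.app i x, p.2)
      naturality := fun g x => Prod.ext (p.1.naturality g x) rfl }
  map f :=
    { app := fun i x => (f.1.app i x, f.2)
      naturality := fun g x => by
        refine Prod.hom_ext ?_ ?_
        · erw [prod_comp_fst, prod_comp_fst, eqToHom_fst, eqToHom_fst]
          exact f.1.naturality g x
        · erw [prod_comp_snd, prod_comp_snd, eqToHom_snd, eqToHom_snd, eqToHom_refl, eqToHom_refl,
            Category.id_comp, Category.comp_id]
          rfl }

lemma prodConst_map_app_snd_naturality {η η' : HomObj O D} {k k' : K}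
    (v : (prodConst O D K).obj (η, k) ⟶ (prodConst O D K).obj (η', k'))
    {i j : I} (g : i ⟶ j) (x : O.obj i) :
    (v.app j (O.map g x)).2 = (v.app i x).2 := by
  have h := congrArg Prod.snd (v.naturality g x)
  erw [prod_comp_snd, prod_comp_snd, eqToHom_snd, eqToHom_snd, eqToHom_refl, eqToHom_refl,
    Category.id_comp, Category.comp_id] at h
  exact h.symm

lemma prodConst_obj_injective {i₀ : I} (x₀ : O.obj i₀) :
    Function.Injective (prodConst O D K).obj := by
  rintro ⟨η, k⟩ ⟨η', k'⟩ h
  have happ := congrFun₂ (congrArg HomObj.app h)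
  exact Prod.ext (HomObj.ext (funext₂ fun i x => congrArg Prod.fst (happ i x)))
    (Prod.ext_iff.1 (happ i₀ x₀)).2

lemma prodConst_obj_surjective [Subsingleton (colimit O)] {i₀ : I} (x₀ : O.obj i₀) :
    Function.Surjective (prodConst O D K).obj := fun ξ =>
  ⟨((homMap O (prodKFst D K)).obj ξ, (ξ.app i₀ x₀).2), HomObj.ext <| funext₂ fun _ x =>
    Prod.ext rfl (Types.eq_of_subsingleton_colimit (fun i x => (ξ.app i x).2)
      (fun g x => (congrArg Prod.snd (ξ.naturality g x)).symm) x₀ x)⟩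

lemma prodConst_full [Subsingleton (colimit O)] {i₀ : I} (x₀ : O.obj i₀) :
    (prodConst O D K).Full where
  map_surjective {p q} v := ⟨((homMap O (prodKFst D K)).map v, (v.app i₀ x₀).2), HomHom.ext <|
    funext₂ fun _ x => Prod.hom_ext rfl (Types.eq_of_subsingleton_colimit (X := p.2 ⟶ q.2)
      (fun i x => (v.app i x).2) (prodConst_map_app_snd_naturality v) x₀ x)⟩

lemma prodConst_faithful {i₀ : I} (x₀ : O.obj i₀) :
    (prodConst O D K).Faithful where
  map_injective h := by
    have happ := congrFun₂ (congrArg HomHom.app h)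
    exact Prod.hom_ext (HomHom.ext (funext₂ fun i x => congrArg Prod.fst (happ i x)))
      (Prod.ext_iff.1 (happ i₀ x₀)).2

end HomObj

/-- Let `I` be a small category and `O : I ⥤ Set` a functor whose
colimit is a one-point set.  Let `D : I ⥤ Cat` and `K` a poset.  Then the natural map
`Hom_{Cat^I}(O, D) × K → Hom_{Cat^I}(O, D × K)` sending `(f₀, k)` to the transformation
`x ↦ (f₀(x), k)` is an isomorphism of categories (bijective on objects, full and
faithful), where `Hom` is the internal hom of `Cat^I` (with `O` a diagram of discrete
categories) and `D × K` the objectwise product. -/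
theorem stmt3 (I : Type) [SmallCategory I] (O : I ⥤ Type)
    (hO : ColimitIsPoint O) (D : I ⥤ Cat.{0, 0}) (K : Type) [PartialOrder K] :
    ∃ Φ : HomObj O D × K ⥤ HomObj O (prodK D K),
      (∀ (η : HomObj O D) (k : K) (i : I) (x : O.obj i),
        (Φ.obj (η, k)).app i x = (η.app i x, k)) ∧
      Function.Bijective Φ.obj ∧ Φ.Full ∧ Φ.Faithful := by
  have : Subsingleton (colimit O) := hO.2
  obtain ⟨i₀, x₀, -⟩ := Types.jointly_surjective' hO.1.some
  exact ⟨HomObj.prodConst O D K, fun _ _ _ _ => rfl,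
    ⟨HomObj.prodConst_obj_injective x₀, HomObj.prodConst_obj_surjective x₀⟩,
    HomObj.prodConst_full x₀, HomObj.prodConst_faithful x₀⟩
end

section
/- Let i : A → B be a Dwyer map between posets with factorization A → W → B (W the cosieve, r : W → A the right adjoint retraction), and let F : A → C be a functor to a small category C. Let D denote the pushout of i along F in Cat. Then ob(D) = ob(C) ⊔ (ob(B) \ ob(A)), and for objects d, d' of D: D(d,d') = B(d,d') if both lie in ob(B) \ ob(A); D(d,d') = C(d,d') if both lie in ob(C); D(d,d') = ∅ if d ∈ ob(B) \ ob(A) and d' ∈ ob(C); and D(d,d') = C(d, F(r(d'))) if d ∈ ob(C) and d' ∈ ob(B) \ ob(A). -/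
open CategoryTheory

/-- A monotone map `i : A →o B` of posets is a *sieve* if every `b ≤ i a` lifts to `A`. -/
def IsSieveMap {A B : Type} [PartialOrder A] [PartialOrder B] (i : A →o B) : Prop :=
  ∀ (a : A) (b : B), b ≤ i a → ∃ a' : A, i a' = b

/-- A subset `W` of a poset `B` is a *cosieve* if it is closed under passing to larger
elements. -/
def IsCosieveSet {B : Type} [PartialOrder B] (W : Set B) : Prop :=
  ∀ w ∈ W, ∀ b : B, w ≤ b → b ∈ W

/-!
The pushout is constructed by hand: objects `C ⊕ (B \ A)`, morphisms `c ⟶ b` the pairs of a proof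
of `b ∈ W` and a morphism `c ⟶ F (r b)`, composed with `b ≤ b'` through `F (r b ≤ r b')`
(the cosieve condition keeps `b'` in `W`). Sending `b ∈ A` to `F (r b)` and `b ∉ A` to itself is
a functor out of `B` because `A` is a sieve, so this category `E` is a cocone. The functor `E ⥤ D`
built from `inl, inr` and the functor `D ⥤ E` given by the universal property are mutually inverse:
one composite is the identity by the universal property of `D`, the other because `E` is generated
by the images of `B` and `C`, every mixed morphism being `inr u` followed by the image of the
counit `i (r b) ≤ b`. All four descriptions of hom-sets are then read off from `E`.
-/

namespace CategoryTheory.Functor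

lemma map_heq_map {Y X : Type*} [Category Y] [Category X] (G : Y ⥤ X) {x y x' y' : Y}
    (hx : x = x') (hy : y = y') {f : x ⟶ y} {f' : x' ⟶ y'} (h : f ≍ f') :
    G.map f ≍ G.map f' := by
  subst hx hy
  rw [eq_of_heq h]

lemma map_heq_of_preorder {P X : Type*} [Preorder P] [Category X] (G : P ⥤ X) {x y x' y' : P}
    (hx : x = x') (hy : y = y') (f : x ⟶ y) (f' : x' ⟶ y') : G.map f ≍ G.map f' := by
  subst hx hy
  rw [Subsingleton.elim f f']

lemma map_comp_eqToHom_of_eq {A X : Type*} [Category A] [Category X] {P Q : A ⥤ X} (h : P = Q)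
    {a a' : A} (f : a ⟶ a') :
    Q.map f ≫ eqToHom (congr_obj h a').symm = eqToHom (congr_obj h a).symm ≫ P.map f := by
  subst h
  simp

end CategoryTheory.Functor

universe u v

structure DwyerMap (A B : Type) [PartialOrder A] [PartialOrder B] where
  i : A →o B
  isSieve : IsSieveMap i
  W : Set B
  isCosieve : IsCosieveSet W
  mem_W : ∀ a, i a ∈ W
  r : W →o A
  adj : ∀ (a : A) (w : W), i a ≤ (w : B) ↔ a ≤ r w
  r_i : ∀ a, r ⟨i a, mem_W a⟩ = a

namespace DwyerMap

variable {A B : Type} [PartialOrder A] [PartialOrder B] (d : DwyerMap A B)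

lemma mem_W_of_mem_range {b : B} (h : b ∈ Set.range d.i) : b ∈ d.W := by
  obtain ⟨a, rfl⟩ := h
  exact d.mem_W a

lemma mem_range_of_le {b b' : B} (hbb : b ≤ b') (h : b' ∈ Set.range d.i) :
    b ∈ Set.range d.i := by
  obtain ⟨a, rfl⟩ := h
  exact d.isSieve a b hbb

lemma i_r_le (w : d.W) : d.i (d.r w) ≤ w :=
  (d.adj _ w).mpr le_rfl

lemma i_r_of_mem_range {b : B} (h : b ∈ Set.range d.i) (hw : b ∈ d.W) :
    d.i (d.r ⟨b, hw⟩) = b := by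
  obtain ⟨a, rfl⟩ := h
  exact congrArg d.i (d.r_i a)

variable {C : Type} [SmallCategory C] (F : A ⥤ C)

def Pushout (_ : A ⥤ C) : Type := C ⊕ {b : B // b ∉ Set.range d.i}

namespace Pushout

variable {d F}

def Hom : d.Pushout F → d.Pushout F → Type
  | Sum.inl c, Sum.inl c' => c ⟶ c'
  | Sum.inl c, Sum.inr b => Σ' hw : b.1 ∈ d.W, c ⟶ F.obj (d.r ⟨b.1, hw⟩)
  | Sum.inr _, Sum.inl _ => PEmpty
  | Sum.inr b, Sum.inr b' => b.1 ⟶ b'.1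

def id : (x : d.Pushout F) → Hom x x
  | Sum.inl c => 𝟙 c
  | Sum.inr b => 𝟙 b.1

def comp : {x y z : d.Pushout F} → Hom x y → Hom y z → Hom x z
  | Sum.inl _, Sum.inl _, Sum.inl _, f, g => f ≫ g
  | Sum.inl _, Sum.inl _, Sum.inr _, f, g => ⟨g.1, f ≫ g.2⟩
  | Sum.inl _, Sum.inr _, Sum.inr _, f, g =>
      ⟨d.isCosieve _ f.1 _ (leOfHom g), f.2 ≫ F.map (homOfLE (d.r.monotone (leOfHom g)))⟩
  | Sum.inr _, Sum.inr _, Sum.inr _, f, g => f ≫ g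
  | Sum.inr _, Sum.inl _, _, f, _ => f.elim
  | Sum.inl _, Sum.inr _, Sum.inl _, _, g => g.elim
  | Sum.inr _, Sum.inr _, Sum.inl _, _, g => g.elim

instance : Category (d.Pushout F) where
  Hom := Hom
  id := id
  comp := comp
  id_comp {x y} f := by
    rcases x with c | b <;> rcases y with c' | b'
    · exact Category.id_comp (obj := C) f
    · exact congrArg (PSigma.mk f.1) (Category.id_comp (obj := C) f.2)
    · exact f.elim
    · exact Category.id_comp (obj := B) f
  comp_id {x y} f := by
    rcases x with c | b <;> rcases y with c' | b'
    · exact Category.comp_id (obj := C) f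
    · exact congrArg (PSigma.mk f.1)
        ((congrArg _ (F.map_id _)).trans (Category.comp_id (obj := C) f.2))
    · exact f.elim
    · exact Category.comp_id (obj := B) f
  assoc {w x y z} f g h := by
    rcases w with _ | _ <;> rcases x with _ | _ <;> rcases y with _ | _ <;> rcases z with _ | _
    all_goals first | exact f.elim | exact g.elim | exact h.elim | rfl |
      exact Category.assoc (obj := C) f g h |
      exact congrArg (PSigma.mk _) (Category.assoc (obj := C) _ _ _) |
      exact congrArg (PSigma.mk _)
        ((Category.assoc (obj := C) _ _ _).trans (congrArg _ (F.map_comp _ _).symm))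

variable (F) in
def ofB (b : {b : B // b ∉ Set.range d.i}) : d.Pushout F :=
  Sum.inr b

variable (d F) in
def inr : C ⥤ d.Pushout F where
  obj := Sum.inl
  map f := f
  map_id _ := rfl
  map_comp _ _ := rfl

variable (d F) in
/-- Parametrised by the `Decidable` instance, so that proofs can case on membership in the range. -/
def inlObj (b : B) : Decidable (b ∈ Set.range d.i) → d.Pushout F
  | isTrue h => Sum.inl (F.obj (d.r ⟨b, d.mem_W_of_mem_range h⟩))
  | isFalse h => Sum.inr ⟨b, h⟩

variable (F) in
def inlMap {b b' : B} (hbb : b ≤ b') :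
    (p : Decidable (b ∈ Set.range d.i)) → (p' : Decidable (b' ∈ Set.range d.i)) →
      (inlObj d F b p ⟶ inlObj d F b' p')
  | isTrue _, isTrue _ => F.map (homOfLE (d.r.monotone hbb))
  | isTrue h, isFalse _ =>
      ⟨d.isCosieve _ (d.mem_W_of_mem_range h) _ hbb, F.map (homOfLE (d.r.monotone hbb))⟩
  | isFalse h, isTrue h' => absurd (d.mem_range_of_le hbb h') h
  | isFalse _, isFalse _ => homOfLE hbb

lemma inlMap_refl (b : B) (p : Decidable (b ∈ Set.range d.i)) :
    inlMap F le_rfl p p = 𝟙 (inlObj d F b p) := by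
  cases p
  · rfl
  · exact F.map_id _

lemma inlMap_trans {b b' b'' : B} (h : b ≤ b') (h' : b' ≤ b'')
    (p : Decidable (b ∈ Set.range d.i)) (p' : Decidable (b' ∈ Set.range d.i)) (p'' : Decidable (b'' ∈ Set.range d.i)) :
    inlMap F (h.trans h') p p'' = inlMap F h p p' ≫ inlMap F h' p' p'' := by
  cases p <;> cases p' <;> cases p''
  all_goals first
    | exact absurd (d.mem_range_of_le h ‹_›) ‹_›
    | exact absurd (d.mem_range_of_le h' ‹_›) ‹_›
    | rfl
    | exact F.map_comp _ _
    | exact congrArg (PSigma.mk _) (F.map_comp _ _)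

variable (d F) in
noncomputable def inl : B ⥤ d.Pushout F where
  obj b := inlObj d F b (Classical.dec _)
  map f := inlMap F (leOfHom f) _ _
  map_id b := inlMap_refl b _
  map_comp f g := inlMap_trans (leOfHom f) (leOfHom g) _ _ _

lemma inl_obj_of_not_mem {b : B} (hb : b ∉ Set.range d.i) :
    (inl d F).obj b = ofB F ⟨b, hb⟩ := by
  change inlObj d F b _ = _
  cases Classical.dec (b ∈ Set.range d.i) with
  | isTrue h => exact absurd h hb
  | isFalse h => rfl

lemma inlObj_i (a : A) (p : Decidable (d.i a ∈ Set.range d.i)) :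
    inlObj d F (d.i a) p = (inr d F).obj (F.obj a) := by
  cases p with
  | isTrue h => exact congrArg (fun a => Sum.inl (F.obj a)) (d.r_i a)
  | isFalse h => exact absurd ⟨a, rfl⟩ h

lemma inlMap_i {a a' : A} (f : a ⟶ a') (p : Decidable (d.i a ∈ Set.range d.i))
    (p' : Decidable (d.i a' ∈ Set.range d.i)) :
    inlMap F (d.i.monotone (leOfHom f)) p p' ≍ (inr d F).map (F.map f) := by
  cases p with
  | isFalse h => exact absurd ⟨a, rfl⟩ h
  | isTrue h =>
    cases p' with
    | isFalse h' => exact absurd ⟨a', rfl⟩ h'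
    | isTrue h' => exact (F ⋙ inr d F).map_heq_of_preorder (d.r_i a) (d.r_i a') _ f

variable (d F) in
lemma i_comp_inl : d.i.monotone.functor ⋙ inl d F = F ⋙ inr d F :=
  Functor.hext (fun a => inlObj_i a _) fun _ _ f => inlMap_i f _ _

section Lift

variable {X : Type u} [Category.{v} X] (G : B ⥤ X) (H : C ⥤ X)
  (w : d.i.monotone.functor ⋙ G = F ⋙ H)

lemma map_comp_eqToHom_comp_map {c : C} {b b' : B} (hw : b ∈ d.W)
    (u : c ⟶ F.obj (d.r ⟨b, hw⟩)) (g : b ⟶ b') (hw' : b' ∈ d.W) :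
    H.map (u ≫ F.map (homOfLE (d.r.monotone (leOfHom g) : d.r ⟨b, hw⟩ ≤ d.r ⟨b', hw'⟩))) ≫
        eqToHom (Functor.congr_obj w (d.r ⟨b', hw'⟩)).symm ≫
        G.map (homOfLE (d.i_r_le ⟨b', hw'⟩)) =
      (H.map u ≫ eqToHom (Functor.congr_obj w (d.r ⟨b, hw⟩)).symm ≫
        G.map (homOfLE (d.i_r_le ⟨b, hw⟩))) ≫ G.map g := by
  rw [H.map_comp, Category.assoc, reassoc_of% (Functor.map_comp_eqToHom_of_eq w _)]
  simp only [Category.assoc, ← G.map_comp]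
  rfl

variable (d F)

def liftMap : {x y : d.Pushout F} → (x ⟶ y) → ((Sum.elim H.obj fun b => G.obj b.1) x ⟶
    (Sum.elim H.obj fun b => G.obj b.1) y)
  | Sum.inl _, Sum.inl _, u => H.map u
  | Sum.inl _, Sum.inr b, u =>
      H.map u.2 ≫ eqToHom (Functor.congr_obj w (d.r ⟨b.1, u.1⟩)).symm ≫
        G.map (homOfLE (d.i_r_le ⟨b.1, u.1⟩))
  | Sum.inr _, Sum.inl _, u => u.elim
  | Sum.inr _, Sum.inr _, u => G.map u

def lift : d.Pushout F ⥤ X where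
  obj := Sum.elim H.obj fun b => G.obj b.1
  map := liftMap d F G H w
  map_id x := by
    rcases x with c | b
    · exact H.map_id c
    · exact G.map_id b.1
  map_comp {x y z} f g := by
    rcases x with c | b <;> rcases y with c' | b' <;> rcases z with c'' | b''
    all_goals first | exact f.elim | exact g.elim | skip
    · exact H.map_comp f g
    · obtain ⟨hw, u⟩ := g
      change c ⟶ c' at f
      change H.map (f ≫ u) ≫ _ = H.map f ≫ H.map u ≫ _
      rw [H.map_comp, Category.assoc]
    · obtain ⟨hw, u⟩ := f
      change b'.1 ⟶ b''.1 at g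
      change H.map (u ≫ F.map _) ≫ _ = (H.map u ≫ _) ≫ G.map g
      exact map_comp_eqToHom_comp_map G H w hw u g _
    · exact G.map_comp f g

variable {d F} in
lemma lift_obj_inlObj (b : B) (p : Decidable (b ∈ Set.range d.i)) :
    (lift d F G H w).obj (inlObj d F b p) = G.obj b := by
  cases p with
  | isTrue h =>
    exact (Functor.congr_obj w _).symm.trans (congrArg G.obj (d.i_r_of_mem_range h _))
  | isFalse h => rfl

variable {d F} in
lemma lift_map_inlMap {b b' : B} (hbb : b ≤ b') (p : Decidable (b ∈ Set.range d.i))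
    (p' : Decidable (b' ∈ Set.range d.i)) :
    (lift d F G H w).map (inlMap F hbb p p') ≍ G.map (homOfLE hbb) := by
  cases p with
  | isFalse h =>
    cases p' with
    | isTrue h' => exact absurd (d.mem_range_of_le hbb h') h
    | isFalse h' => rfl
  | isTrue h =>
    cases p' with
    | isTrue h' =>
      exact (Functor.hcongr_hom w.symm _).trans
        (G.map_heq_of_preorder (d.i_r_of_mem_range h _) (d.i_r_of_mem_range h' _) _ _)
    | isFalse h' =>
      change H.map (F.map _) ≫ eqToHom _ ≫ G.map _ ≍ _
      rw [reassoc_of% (Functor.map_comp_eqToHom_of_eq w _), eqToHom_comp_heq_iff, ← G.map_comp]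
      exact G.map_heq_of_preorder (d.i_r_of_mem_range h _) rfl _ _

lemma inl_comp_lift : inl d F ⋙ lift d F G H w = G :=
  Functor.hext (fun b => lift_obj_inlObj G H w b _) fun _ _ _ => lift_map_inlMap G H w _ _ _

lemma inr_comp_lift : inr d F ⋙ lift d F G H w = H :=
  rfl

end Lift

def homMk {c : C} {b : {b : B // b ∉ Set.range d.i}} (hw : b.1 ∈ d.W)
    (u : c ⟶ F.obj (d.r ⟨b.1, hw⟩)) : (inr d F).obj c ⟶ ofB F b :=
  show Σ' hw : b.1 ∈ d.W, c ⟶ F.obj (d.r ⟨b.1, hw⟩) from ⟨hw, u⟩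

lemma homMk_heq_homMk {c c' : C} (hc : c = c') {b : {b : B // b ∉ Set.range d.i}}
    (hw : b.1 ∈ d.W) {u : c ⟶ F.obj (d.r ⟨b.1, hw⟩)} {u' : c' ⟶ F.obj (d.r ⟨b.1, hw⟩)}
    (h : u ≍ u') : homMk hw u ≍ homMk hw u' := by
  subst hc
  rw [eq_of_heq h]

lemma inr_map_comp_homMk {c : C} {b : {b : B // b ∉ Set.range d.i}} (hw : b.1 ∈ d.W)
    (u : c ⟶ F.obj (d.r ⟨b.1, hw⟩)) : (inr d F).map u ≫ homMk hw (𝟙 _) = homMk hw u := by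
  change homMk hw (u ≫ 𝟙 _) = homMk hw u
  rw [Category.comp_id]

lemma inlMap_i_r_le_heq {b : {b : B // b ∉ Set.range d.i}} (hw : b.1 ∈ d.W)
    (p : Decidable (d.i (d.r ⟨b.1, hw⟩) ∈ Set.range d.i))
    (p' : Decidable (b.1 ∈ Set.range d.i)) :
    inlMap F (d.i_r_le ⟨b.1, hw⟩) p p' ≍ homMk (F := F) (b := b) hw (𝟙 _) := by
  cases p with
  | isFalse h => exact absurd ⟨_, rfl⟩ h
  | isTrue h =>
    cases p' with
    | isTrue h' => exact absurd h' b.2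
    | isFalse h' =>
      refine homMk_heq_homMk (congrArg F.obj (d.r_i _)) hw ?_
      rw [← F.map_id]
      exact F.map_heq_of_preorder (d.r_i _) rfl _ _

lemma inlMap_heq_of_not_mem {b b' : {b : B // b ∉ Set.range d.i}} (hbb : b.1 ≤ b'.1)
    (p : Decidable (b.1 ∈ Set.range d.i)) (p' : Decidable (b'.1 ∈ Set.range d.i)) :
    inlMap F hbb p p' ≍ (homOfLE hbb : ofB F b ⟶ ofB F b') := by
  cases p with
  | isTrue h => exact absurd h b.2
  | isFalse h =>
    cases p' with
    | isTrue h' => exact absurd h' b'.2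
    | isFalse h' => rfl

lemma functor_ext {X : Type u} [Category.{v} X] {M M' : d.Pushout F ⥤ X}
    (hl : inl d F ⋙ M = inl d F ⋙ M') (hr : inr d F ⋙ M = inr d F ⋙ M') : M = M' := by
  have hobj : ∀ x, M.obj x = M'.obj x := by
    rintro (c | b)
    · exact Functor.congr_obj hr c
    · have h := Functor.congr_obj hl b.1
      rwa [Functor.comp_obj, Functor.comp_obj, inl_obj_of_not_mem b.2] at h
  have hmap_inl {x y : d.Pushout F} {b b' : B} (g : b ⟶ b') (hx : (inl d F).obj b = x)
      (hy : (inl d F).obj b' = y) (f : x ⟶ y) (hf : (inl d F).map g ≍ f) :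
      M.map f ≍ M'.map f :=
    ((M.map_heq_map hx hy hf).symm.trans (Functor.hcongr_hom hl g)).trans
      (M'.map_heq_map hx hy hf)
  refine Functor.hext hobj ?_
  rintro (c | b) (c' | b') f
  · exact Functor.hcongr_hom hr f
  · obtain ⟨hw, u⟩ := f
    change M.map (homMk hw u) ≍ M'.map (homMk hw u)
    rw [← inr_map_comp_homMk, M.map_comp, M'.map_comp]
    exact heq_comp (hobj _) (hobj _) (hobj _) (Functor.hcongr_hom hr u)
      (hmap_inl (homOfLE (d.i_r_le ⟨b'.1, hw⟩)) (Functor.congr_obj (i_comp_inl d F) _)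
        (inl_obj_of_not_mem b'.2) _ (inlMap_i_r_le_heq hw _ _))
  · exact f.elim
  · exact hmap_inl (b := b.1) (b' := b'.1) f (inl_obj_of_not_mem b.2) (inl_obj_of_not_mem b'.2) f
      (inlMap_heq_of_not_mem _ _ _)

lemma homMk_bijective (c : C) {b : {b : B // b ∉ Set.range d.i}} (hw : b.1 ∈ d.W) :
    Function.Bijective (homMk (F := F) (c := c) (b := b) hw) :=
  ⟨fun _ _ h => eq_of_heq (PSigma.mk.inj h).2, fun f => ⟨f.2, rfl⟩⟩

lemma exists_inverse_lift {D : Type} [SmallCategory D] {G : B ⥤ D} {H : C ⥤ D}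
    (sq : IsPushout d.i.monotone.functor.toCatHom F.toCatHom G.toCatHom H.toCatHom) :
    ∃ K : D ⥤ d.Pushout F, K ⋙ lift d F G H (congrArg Cat.Hom.toFunctor sq.w) = 𝟭 D ∧
      lift d F G H (congrArg Cat.Hom.toFunctor sq.w) ⋙ K = 𝟭 (d.Pushout F) := by
  set L := lift d F G H (congrArg Cat.Hom.toFunctor sq.w)
  have hw : d.i.monotone.functor.toCatHom ≫ (inl d F).toCatHom =
      F.toCatHom ≫ (inr d F).toCatHom :=
    congrArg Functor.toCatHom (i_comp_inl d F)
  set K := (sq.desc _ _ hw).toFunctor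
  have hGK : G ⋙ K = inl d F := congrArg Cat.Hom.toFunctor (sq.inl_desc _ _ hw)
  have hHK : H ⋙ K = inr d F := congrArg Cat.Hom.toFunctor (sq.inr_desc _ _ hw)
  refine ⟨K, ?_, ?_⟩
  · have : (K ⋙ L).toCatHom = 𝟙 (Cat.of D) := by
      refine sq.hom_ext (Cat.Hom.ext ?_) (Cat.Hom.ext ?_)
      · change (G ⋙ K) ⋙ L = G
        rw [hGK]
        exact inl_comp_lift d F G H _
      · change (H ⋙ K) ⋙ L = H
        rw [hHK]
        exact inr_comp_lift d F G H _
    exact congrArg Cat.Hom.toFunctor this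
  · refine functor_ext ?_ ?_
    · change (inl d F ⋙ L) ⋙ K = inl d F
      rw [show inl d F ⋙ L = G from inl_comp_lift d F G H _, hGK]
    · change (inr d F ⋙ L) ⋙ K = inr d F
      rw [show inr d F ⋙ L = H from inr_comp_lift d F G H _, hHK]

end Pushout
end DwyerMap

open DwyerMap Pushout

theorem stmt5_general
    (A B : Type) [PartialOrder A] [PartialOrder B]
    (i : A →o B) (hsieve : IsSieveMap i)
    (W : Set B) (hW : IsCosieveSet W) (hiW : ∀ a : A, i a ∈ W)
    (r : W →o A) (hadj : ∀ (a : A) (w : W), i a ≤ (w : B) ↔ a ≤ r w)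
    (hretr : ∀ a : A, r ⟨i a, hiW a⟩ = a)
    (C : Type) [SmallCategory C] (F : A ⥤ C)
    (D : Type) [SmallCategory D]
    (inl : B ⥤ D) (inr : C ⥤ D)
    (sq : IsPushout (show Cat.of A ⟶ Cat.of B from i.monotone.functor.toCatHom)
      (show Cat.of A ⟶ Cat.of C from F.toCatHom)
      (show Cat.of B ⟶ Cat.of D from inl.toCatHom) (show Cat.of C ⟶ Cat.of D from inr.toCatHom)) :
    -- objects: `ob(D) = ob(C) ⊔ (ob(B) \ ob(A))`
    (Function.Bijective
      (Sum.elim (inr.obj : C → D)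
        (fun b : {b : B // b ∉ Set.range i} => inl.obj b.1))) ∧
    -- `D(d, d') = B(d, d')` for `d, d' ∈ ob(B) \ ob(A)`
    (∀ b b' : B, b ∉ Set.range i → b' ∉ Set.range i →
      Function.Bijective (fun f : b ⟶ b' => inl.map f)) ∧
    -- `D(d, d') = C(d, d')` for `d, d' ∈ ob(C)`
    (∀ c c' : C, Function.Bijective (fun f : c ⟶ c' => inr.map f)) ∧
    -- `D(d, d') = ∅` for `d ∈ ob(B) \ ob(A)`, `d' ∈ ob(C)`
    (∀ (b : B) (c : C), b ∉ Set.range i → IsEmpty (inl.obj b ⟶ inr.obj c)) ∧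
    -- `D(d, d') = C(d, F(r d'))` for `d ∈ ob(C)`, `d' ∈ ob(B) \ ob(A)`
    (∀ (c : C) (b : B) (_ : b ∉ Set.range i) (hw : b ∈ W),
      Function.Bijective (fun u : c ⟶ F.obj (r ⟨b, hw⟩) =>
        inr.map u ≫
          eqToHom (Functor.congr_obj
            (show i.monotone.functor ⋙ inl = F ⋙ inr from congrArg Cat.Hom.toFunctor sq.w) (r ⟨b, hw⟩)).symm ≫
          inl.map (homOfLE ((hadj (r ⟨b, hw⟩) ⟨b, hw⟩).mpr le_rfl)))) ∧
    (∀ (c : C) (b : B), b ∉ Set.range i → b ∉ W →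
      IsEmpty (inr.obj c ⟶ inl.obj b)) := by
  let d : DwyerMap A B := ⟨i, hsieve, W, hW, hiW, r, hadj, hretr⟩
  obtain ⟨K, hKL, hLK⟩ := exists_inverse_lift (d := d) sq
  set L := lift d F inl inr (congrArg Cat.Hom.toFunctor sq.w)
  have hL : L.FullyFaithful :=
    (CategoryTheory.Equivalence.mk L K (eqToIso hLK.symm) (eqToIso hKL)).fullyFaithfulFunctor
  have hLobj : Function.Bijective L.obj := Function.bijective_iff_has_inverse.mpr
    ⟨K.obj, Functor.congr_obj hLK, Functor.congr_obj hKL⟩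
  -- Each map in the statement is, definitionally, `L.obj` or `L.map` on `d.Pushout F`.
  refine ⟨hLobj, fun b b' hb hb' => hL.map_bijective (ofB F ⟨b, hb⟩) (ofB F ⟨b', hb'⟩),
    fun c c' => hL.map_bijective (Sum.inl c) (Sum.inl c'), fun b c hb => ⟨fun g => ?_⟩,
    fun c b hb hw => (hL.map_bijective _ _).comp (homMk_bijective c (b := ⟨b, hb⟩) hw),
    fun c b hb hbW => ⟨fun g => hbW ?_⟩⟩
  · exact (hL.preimage (X := ofB F ⟨b, hb⟩) (Y := Sum.inl c) g).elim
  · exact (hL.preimage (X := Sum.inl c) (Y := ofB F ⟨b, hb⟩) g).1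

/-- Let `i : A → B` be a Dwyer map between posets, with factorization
`A → W → B` (`W ⊆ B` the cosieve, `r : W → A` the right adjoint retraction of `A → W`),
and let `F : A ⥤ C` be a functor to a small category.  Let `D` be the pushout of `i`
along `F` in `Cat`, with structure maps `inl : B ⥤ D` and `inr : C ⥤ D`.  Then
`ob(D) = ob(C) ⊔ (ob(B) \ ob(A))`, and for objects `d, d'` of `D`:
`D(d, d') = B(d, d')` if both lie in `ob(B) \ ob(A)`; `D(d, d') = C(d, d')` if both lie
in `ob(C)`; `D(d, d') = ∅` if `d ∈ ob(B) \ ob(A)` and `d' ∈ ob(C)`; and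
`D(d, d') = C(d, F(r d'))` if `d ∈ ob(C)` and `d' ∈ ob(B) \ ob(A)` (this hom-set being
empty when `d' ∉ W`). -/
theorem stmt5
    (A B : Type) [PartialOrder A] [PartialOrder B]
    (i : A →o B) (hinj : Function.Injective i) (hsieve : IsSieveMap i)
    (W : Set B) (hW : IsCosieveSet W) (hiW : ∀ a : A, i a ∈ W)
    (r : W →o A) (hadj : ∀ (a : A) (w : W), i a ≤ (w : B) ↔ a ≤ r w)
    (hretr : ∀ a : A, r ⟨i a, hiW a⟩ = a)
    (C : Type) [SmallCategory C] (F : A ⥤ C)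
    (D : Type) [SmallCategory D]
    (inl : B ⥤ D) (inr : C ⥤ D)
    (sq : IsPushout (show Cat.of A ⟶ Cat.of B from i.monotone.functor.toCatHom)
      (show Cat.of A ⟶ Cat.of C from F.toCatHom)
      (show Cat.of B ⟶ Cat.of D from inl.toCatHom) (show Cat.of C ⟶ Cat.of D from inr.toCatHom)) :
    -- objects: `ob(D) = ob(C) ⊔ (ob(B) \ ob(A))`
    (Function.Bijective
      (Sum.elim (inr.obj : C → D)
        (fun b : {b : B // b ∉ Set.range i} => inl.obj b.1))) ∧
    -- `D(d, d') = B(d, d')` for `d, d' ∈ ob(B) \ ob(A)`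
    (∀ b b' : B, b ∉ Set.range i → b' ∉ Set.range i →
      Function.Bijective (fun f : b ⟶ b' => inl.map f)) ∧
    -- `D(d, d') = C(d, d')` for `d, d' ∈ ob(C)`
    (∀ c c' : C, Function.Bijective (fun f : c ⟶ c' => inr.map f)) ∧
    -- `D(d, d') = ∅` for `d ∈ ob(B) \ ob(A)`, `d' ∈ ob(C)`
    (∀ (b : B) (c : C), b ∉ Set.range i → IsEmpty (inl.obj b ⟶ inr.obj c)) ∧
    -- `D(d, d') = C(d, F(r d'))` for `d ∈ ob(C)`, `d' ∈ ob(B) \ ob(A)`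
    (∀ (c : C) (b : B) (_ : b ∉ Set.range i) (hw : b ∈ W),
      Function.Bijective (fun u : c ⟶ F.obj (r ⟨b, hw⟩) =>
        inr.map u ≫
          eqToHom (Functor.congr_obj
            (show i.monotone.functor ⋙ inl = F ⋙ inr from congrArg Cat.Hom.toFunctor sq.w) (r ⟨b, hw⟩)).symm ≫
          inl.map (homOfLE ((hadj (r ⟨b, hw⟩) ⟨b, hw⟩).mpr le_rfl)))) ∧
    (∀ (c : C) (b : B), b ∉ Set.range i → b ∉ W →
      IsEmpty (inr.obj c ⟶ inl.obj b)) :=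
  stmt5_general A B i hsieve W hW hiW r hadj hretr C F D inl inr sq
end

section
/- Let I be a small category, O : I → Set a functor with colim_I O = *, and let X₀ → X₁ → ⋯ → X_a → X_{a+1} → ⋯ be a transfinite sequence of natural transformations in Set^I such that each X_a → X_{a+1} is objectwise injective and, for every morphism g : i → j in I and every object x, x lies in the image of X_b(i) iff X(g)(x) lies in the image of X_b(j). Then every natural transformation f : O → colim_a X_a factors through some X_b; hence colim_a Hom(O, X_a) → Hom(O, colim_a X_a) is a bijection. -/
/-!
Choose a point `x₀` of `O`; since `colim_a X_a` is the union of the stages, `f(x₀)` lies in some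
stage `X_b`. The hypothesis on images says that the stage-`b` part of `colim_a X_a` is preserved
and reflected by every structure map, so the set of points of `O` that `f` sends into `X_b` is
closed under zig-zags. As `colim_I O` is a point, every point of `O` is connected to `x₀`, hence
`f` lands in `X_b` and, `X_b → colim_a X_a` being a monomorphism, factors through it. This is
surjectivity of `colim_a Hom(O, X_a) → Hom(O, colim_a X_a)`; injectivity holds because the
index category is directed and all the maps `X_a → colim_a X_a` are monomorphisms.
-/

open CategoryTheory

open Limits

universe u

namespace CategoryTheory

section Filtered

variable {J : Type u} [SmallCategory J] [IsFilteredOrEmpty J]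

theorem Limits.Types.FilteredColimit.injective_ι_app_of_injective_map {F : J ⥤ Type u}
    (hF : ∀ ⦃a b : J⦄ (h : a ⟶ b), Function.Injective (F.map h))
    {t : Cocone F} (ht : IsColimit t) (b : J) : Function.Injective (t.ι.app b) := by
  intro x y hxy
  obtain ⟨k, h, hk⟩ := (isColimit_eq_iff' ht x y).1 hxy
  exact hF h hk

theorem Limits.IsColimit.mono_ι_app_of_injective_map {I : Type*} [Category I]
    {X : J ⥤ I ⥤ Type u}
    (hX : ∀ ⦃a b : J⦄ (h : a ⟶ b) (i : I), Function.Injective ((X.map h).app i))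
    {c : Cocone X} (hc : IsColimit c) (b : J) : Mono (c.ι.app b) := by
  rw [NatTrans.mono_iff_mono_app]
  intro i
  rw [mono_iff_injective]
  exact Types.FilteredColimit.injective_ι_app_of_injective_map (fun _ _ h => hX h i)
    (isColimitOfPreserves ((evaluation I _).obj i) hc) b

noncomputable def Limits.isColimitCoyonedaMapCoconeOfMono {C : Type*} [Category C] {X : J ⥤ C}
    (c : Cocone X) [∀ j, Mono (c.ι.app j)] (O : C)
    (hO : ∀ f : O ⟶ c.pt, ∃ (b : J) (g : O ⟶ X.obj b), g ≫ c.ι.app b = f) :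
    IsColimit ((coyoneda.obj (Opposite.op O)).mapCocone c) :=
  Types.FilteredColimit.isColimitOf _ _ (fun f => (hO f).imp fun _ ⟨g, hg⟩ => ⟨g, hg.symm⟩)
    fun a a' g g' hgg' => by
      refine ⟨IsFiltered.max a a', IsFiltered.leftToMax a a', IsFiltered.rightToMax a a', ?_⟩
      change g ≫ X.map _ = g' ≫ X.map _
      rw [← cancel_mono (c.ι.app (IsFiltered.max a a')), Category.assoc, Category.assoc,
        c.w, c.w]
      exact hgg'

end Filtered

section Saturated

variable {I : Type*} [Category I]

theorem Limits.Types.mem_of_subsingleton_colimit {O : I ⥤ Type u} [HasColimit O]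
    [Subsingleton (colimit O)] (S : ∀ i, Set (O.obj i))
    (hS : ∀ {i j : I} (g : i ⟶ j) (x : O.obj i), x ∈ S i ↔ O.map g x ∈ S j)
    {i₀ : I} {x₀ : O.obj i₀} (h₀ : x₀ ∈ S i₀) (i : I) (x : O.obj i) : x ∈ S i := by
  have zigzag (p q : Σ i, O.obj i) (h : Relation.EqvGen O.ColimitTypeRel p q) :
      p.2 ∈ S p.1 ↔ q.2 ∈ S q.1 := by
    induction h with
    | rel p q hpq =>
        obtain ⟨g, hg⟩ := hpq
        rw [hg]
        exact hS g _
    | refl _ => exact Iff.rfl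
    | symm _ _ _ ih => exact ih.symm
    | trans _ _ _ _ _ ih₁ ih₂ => exact ih₁.trans ih₂
  exact (zigzag ⟨i, x⟩ ⟨i₀, x₀⟩ (colimit_eq (Subsingleton.elim _ _))).2 h₀

theorem Subfunctor.range_le_range_of_subsingleton_colimit {O P G : I ⥤ Type u} [HasColimit O]
    [Subsingleton (colimit O)] (m : G ⟶ P)
    (hm : ∀ {i j : I} (g : i ⟶ j) (x : P.obj i),
      x ∈ Set.range (m.app i) ↔ P.map g x ∈ Set.range (m.app j))
    (f : O ⟶ P) {i₀ : I} {x₀ : O.obj i₀} (h₀ : f.app i₀ x₀ ∈ Set.range (m.app i₀)) :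
    Subfunctor.range f ≤ Subfunctor.range m := by
  rintro i _ ⟨x, rfl⟩
  refine Types.mem_of_subsingleton_colimit (fun i => f.app i ⁻¹' Set.range (m.app i))
    (fun g x => ?_) h₀ i x
  simp only [Set.mem_preimage, NatTrans.naturality_apply]
  exact hm g _

theorem Subfunctor.exists_comp_eq_of_range_le {F F' G : I ⥤ Type u}
    (m : G ⟶ F) [Mono m] (f : F' ⟶ F) (h : Subfunctor.range f ≤ Subfunctor.range m) :
    ∃ g : F' ⟶ G, g ≫ m = f :=
  ⟨Subfunctor.lift f h ≫ inv (Subfunctor.toRange m), by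
    rw [Category.assoc, (IsIso.inv_comp_eq _).2 (Subfunctor.toRange_ι m).symm,
      Subfunctor.lift_ι]⟩

end Saturated

end CategoryTheory

theorem stmt18_general (I : Type) [SmallCategory I] (O : I ⥤ Type)
    (hO : ColimitIsPoint O)
    (J : Type) [LinearOrder J]
    (X : J ⥤ (I ⥤ Type))
    (hinj : ∀ (a b : J) (h : a ⟶ b) (i : I), Function.Injective ((X.map h).app i))
    (c : Limits.Cocone X) (hc : Limits.IsColimit c)
    (him : ∀ (b : J) {i j : I} (g : i ⟶ j) (x : c.pt.obj i),
      x ∈ Set.range ((c.ι.app b).app i) ↔ c.pt.map g x ∈ Set.range ((c.ι.app b).app j)) :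
    (∀ f : O ⟶ c.pt, ∃ (b : J) (g : O ⟶ X.obj b), g ≫ c.ι.app b = f) ∧
      Nonempty (Limits.IsColimit
        ((coyoneda.obj (Opposite.op O)).mapCocone c)) := by
  obtain ⟨⟨z⟩, _⟩ := hO
  obtain ⟨i₀, x₀, -⟩ := Types.jointly_surjective' z
  have := hc.mono_ι_app_of_injective_map hinj
  have factors (f : O ⟶ c.pt) : ∃ (b : J) (g : O ⟶ X.obj b), g ≫ c.ι.app b = f := by
    obtain ⟨b, y, hy⟩ := Types.jointly_surjective_of_isColimit
      (isColimitOfPreserves ((evaluation I Type).obj i₀) hc) (f.app i₀ x₀)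
    exact ⟨b, Subfunctor.exists_comp_eq_of_range_le _ _
      (Subfunctor.range_le_range_of_subsingleton_colimit _ (him b) f ⟨y, hy⟩)⟩
  exact ⟨factors, ⟨isColimitCoyonedaMapCoconeOfMono c O factors⟩⟩

/-- Let `I` be a small category, `O : I ⥤ Set` with `colim_I O = *`, and
let `X : J ⥤ Set^I` be a transfinite sequence (indexed by a nonempty well-ordered linear
order `J`) of objectwise injective natural transformations such that, for every stage `b`,
every morphism `g : i ⟶ j` of `I` and every element `x` of the colimit at `i`, `x` lies in
the image of `X_b(i)` iff its image under `g` lies in the image of `X_b(j)`.  Then every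
`f : O ⟶ colim_a X_a` factors through some `X_b`; hence the canonical map
`colim_a Hom(O, X_a) → Hom(O, colim_a X_a)` is a bijection. -/
theorem stmt18 (I : Type) [SmallCategory I] (O : I ⥤ Type)
    (hO : ColimitIsPoint O)
    (J : Type) [LinearOrder J] [Nonempty J] [WellFoundedLT J]
    (X : J ⥤ (I ⥤ Type))
    (hinj : ∀ (a b : J) (h : a ⟶ b) (i : I), Function.Injective ((X.map h).app i))
    (c : Limits.Cocone X) (hc : Limits.IsColimit c)
    (him : ∀ (b : J) {i j : I} (g : i ⟶ j) (x : c.pt.obj i),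
      x ∈ Set.range ((c.ι.app b).app i) ↔ c.pt.map g x ∈ Set.range ((c.ι.app b).app j)) :
    (∀ f : O ⟶ c.pt, ∃ (b : J) (g : O ⟶ X.obj b), g ≫ c.ι.app b = f) ∧
      Nonempty (Limits.IsColimit
        ((coyoneda.obj (Opposite.op O)).mapCocone c)) :=
  stmt18_general I O hO J X hinj c hc him
end
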